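/- arXiv:math/0703696 — 2 statements merged into one kernel-verified Lean document; each statement's English description precedes it below -/
import Mathlib

section
/- For every positive integer $D$ and every integer $k\ge 0$, $\lim_{n\to\infty}\ \frac1D\sum_{j=0}^{D-1}\sum_{h=0}^{n} 2^{-n}\binom{n}{h}\, e^{2i\pi\frac{j}{D}(h^2+kh)} = \frac{\rho_k(D)}{D}$. -/
open Finset Filter

noncomputable section

/-- `ρ_k(D) = #{1 ≤ y ≤ D : D ∣ y² + k y}`. -/
def rhok (k D : ℕ) : ℕ := ((Finset.Icc 1 D).filter (fun y => D ∣ y ^ 2 + k * y)).card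

/-! Summing over `j` first, orthogonality of the `D`-th roots of unity turns the expression into
the Euler mean, i.e. the expectation under the binomial distribution `B(n, 1/2)`, of the indicator
of `D ∣ h² + k h`, a `D`-periodic function of `h`. The Euler mean of `h ↦ z ^ h` is
`((1 + z) / 2) ^ n`, which tends to `0` for every `z ≠ 1` on the unit circle; by expanding the
indicator of a residue class in `D`-th roots of unity, `B(n, 1/2)` therefore equidistributes
modulo `D`, and the Euler mean of a `D`-periodic indicator tends to its density `ρ_k(D) / D`. -/

theorem IsPrimitiveRoot.sum_pow_mul_eq_ite {R : Type*} [CommRing R] [IsDomain R] {ζ : R} {D : ℕ}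
    (hζ : IsPrimitiveRoot ζ D) (m : ℕ) :
    ∑ j ∈ range D, ζ ^ (j * m) = if D ∣ m then (D : R) else 0 := by
  simp_rw [mul_comm _ m, pow_mul]
  split_ifs with hm
  · simp [(hζ.pow_eq_one_iff_dvd m).mpr hm]
  · have hne : ζ ^ m - 1 ≠ 0 := sub_ne_zero.mpr fun h => hm ((hζ.pow_eq_one_iff_dvd m).mp h)
    have hD : (ζ ^ m) ^ D = 1 := by rw [← pow_mul, mul_comm, pow_mul, hζ.pow_eq_one, one_pow]
    apply (mul_left_inj' hne).mp
    rw [geom_sum_mul, hD, sub_self, zero_mul]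

def eulerMean (f : ℕ → ℂ) (n : ℕ) : ℂ :=
  ∑ h ∈ range (n + 1), (n.choose h : ℂ) / 2 ^ n * f h

theorem eulerMean_pow (z : ℂ) (n : ℕ) : eulerMean (fun h => z ^ h) n = ((1 + z) / 2) ^ n := by
  rw [eulerMean, div_pow, add_comm (1 : ℂ), add_pow, sum_div]
  refine sum_congr rfl fun h _ => ?_
  simp only [one_pow, mul_one]
  ring

theorem eulerMean_sum {ι : Type*} (s : Finset ι) (f : ι → ℕ → ℂ) (n : ℕ) :
    eulerMean (fun h => ∑ i ∈ s, f i h) n = ∑ i ∈ s, eulerMean (f i) n := by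
  simp only [eulerMean, mul_sum]
  exact sum_comm

theorem eulerMean_const_mul (c : ℂ) (f : ℕ → ℂ) (n : ℕ) :
    eulerMean (fun h => c * f h) n = c * eulerMean f n := by
  simp only [eulerMean, mul_sum, mul_left_comm c]

theorem tendsto_eulerMean_pow_of_norm_eq_one {z : ℂ} (hz : ‖z‖ = 1) (hz1 : z ≠ 1) :
    Tendsto (eulerMean fun h => z ^ h) atTop (nhds 0) := by
  have hlt : ‖(1 + z) / 2‖ < 1 := by
    have := (norm_midpoint_lt_iff (x := (1 : ℂ)) (y := z) (by simp [hz])).mpr hz1.symm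
    rw [Complex.real_smul] at this
    simpa [div_eq_inv_mul] using this
  simp_rw [funext (eulerMean_pow z)]
  exact tendsto_pow_atTop_nhds_zero_of_norm_lt_one hlt

theorem IsPrimitiveRoot.tendsto_eulerMean_pow {ζ : ℂ} {D t : ℕ} (hζ : IsPrimitiveRoot ζ D)
    (ht : t < D) :
    Tendsto (eulerMean fun h => (ζ ^ t) ^ h) atTop (nhds (if t = 0 then 1 else 0)) := by
  split_ifs with ht0
  · subst ht0
    simp_rw [pow_zero, funext (eulerMean_pow 1)]
    norm_num
    exact tendsto_const_nhds.congr fun n => (one_pow n).symm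
  · exact tendsto_eulerMean_pow_of_norm_eq_one
      (by rw [norm_pow, hζ.norm'_eq_one (by omega), one_pow]) (hζ.pow_ne_one_of_pos_of_lt ht0 ht)

theorem dvd_add_pred_mul_iff_modEq {D : ℕ} (hD : D ≠ 0) (h a : ℕ) :
    D ∣ h + (D - 1) * a ↔ h ≡ a [MOD D] := by
  rw [← ZMod.natCast_eq_zero_iff, ← ZMod.natCast_eq_natCast_iff, Nat.cast_add, Nat.cast_mul,
    Nat.cast_pred (Nat.pos_of_ne_zero hD), ZMod.natCast_self, zero_sub, neg_one_mul,
    ← sub_eq_add_neg, sub_eq_zero]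

theorem tendsto_eulerMean_modEq {D : ℕ} (hD : D ≠ 0) (a : ℕ) :
    Tendsto (eulerMean fun h => if h ≡ a [MOD D] then 1 else 0) atTop (nhds (1 / D)) := by
  have hζ := Complex.isPrimitiveRoot_exp D hD
  set ζ := Complex.exp (2 * Real.pi * Complex.I / D)
  -- `D - 1` stands in for `-1`: `ζ ^ (t * ((D - 1) * a)) = ζ ^ (-t a)`
  have hind : ∀ h, (if h ≡ a [MOD D] then (1 : ℂ) else 0)
      = 1 / D * ∑ t ∈ range D, ζ ^ (t * ((D - 1) * a)) * (ζ ^ t) ^ h := by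
    intro h
    have hterm : ∀ t, ζ ^ (t * ((D - 1) * a)) * (ζ ^ t) ^ h = ζ ^ (t * (h + (D - 1) * a)) :=
      fun t => by ring
    simp only [hterm, hζ.sum_pow_mul_eq_ite, dvd_add_pred_mul_iff_modEq hD]
    rw [mul_ite, mul_zero, one_div_mul_cancel (Nat.cast_ne_zero.mpr hD)]
  have hlim := (tendsto_finsetSum (range D) fun t ht =>
    (hζ.tendsto_eulerMean_pow (mem_range.mp ht)).const_mul (ζ ^ (t * ((D - 1) * a)))).const_mul
      (1 / (D : ℂ))
  have hval : ∑ t ∈ range D, ζ ^ (t * ((D - 1) * a)) * (if t = 0 then 1 else 0) = 1 := by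
    simp [Nat.pos_of_ne_zero hD]
  rw [hval, mul_one] at hlim
  refine hlim.congr fun n => ?_
  rw [funext hind, eulerMean_const_mul, eulerMean_sum]
  simp_rw [eulerMean_const_mul]

theorem tendsto_eulerMean_of_periodic {D : ℕ} (hD : D ≠ 0) {p : ℕ → Prop} [DecidablePred p]
    (hp : Function.Periodic p D) :
    Tendsto (eulerMean fun h => if p h then 1 else 0) atTop (nhds (Nat.count p D / D)) := by
  have hdecomp : ∀ h, (if p h then (1 : ℂ) else 0)
      = ∑ a ∈ (range D).filter p, if h ≡ a [MOD D] then 1 else 0 := by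
    intro h
    have hmod : ∀ a ∈ (range D).filter p, (h ≡ a [MOD D]) ↔ a = h % D := fun a ha => by
      rw [Nat.ModEq, Nat.mod_eq_of_lt (mem_range.mp (mem_filter.mp ha).1), eq_comm]
    rw [sum_congr rfl fun a ha => if_congr (hmod a ha) rfl rfl, sum_ite_eq']
    simp only [mem_filter, mem_range, Nat.mod_lt h (Nat.pos_of_ne_zero hD), hp.map_mod_nat,
      true_and]
  have hlim := tendsto_finsetSum ((range D).filter p) fun a _ => tendsto_eulerMean_modEq hD a
  rw [sum_const, ← Nat.count_eq_card_filter_range, nsmul_eq_mul, ← mul_div_assoc, mul_one] at hlim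
  refine hlim.congr fun n => ?_
  rw [funext hdecomp, eulerMean_sum]

/-- Corollary 2.12, the Euler means of the quadratic exponential sums
converge to `ρ_k(D)/D`. -/
theorem euler_mean_quadratic_exponential_tendsto_rhok (D : ℕ) (hD : 0 < D) (k : ℕ) :
    Tendsto
      (fun n : ℕ => (1 / (D : ℂ)) * ∑ j ∈ Finset.range D,
        ∑ h ∈ Finset.range (n + 1), ((n.choose h : ℂ) / 2 ^ n) *
          Complex.exp (2 * Real.pi * Complex.I * (j : ℂ) / (D : ℂ)
            * ((h : ℂ) ^ 2 + (k : ℂ) * (h : ℂ))))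
      atTop (nhds ((rhok k D : ℂ) / (D : ℂ))) := by
  have hζ := Complex.isPrimitiveRoot_exp D hD.ne'
  have hp : Function.Periodic (fun h => D ∣ h ^ 2 + k * h) D := fun h => by
    simp only [show (h + D) ^ 2 + k * (h + D) = h ^ 2 + k * h + D * (2 * h + D + k) by ring,
      Nat.dvd_add_left (dvd_mul_right D _)]
  have hcount : Nat.count (fun h => D ∣ h ^ 2 + k * h) D = rhok k D := by
    rw [← Nat.filter_Ico_card_eq_of_periodic 1 D _ hp, rhok, add_comm, Ico_add_one_right_eq_Icc]
  have hexp : ∀ j h : ℕ, Complex.exp (2 * Real.pi * Complex.I * (j : ℂ) / (D : ℂ)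
      * ((h : ℂ) ^ 2 + (k : ℂ) * (h : ℂ))) =
      Complex.exp (2 * Real.pi * Complex.I / D) ^ (j * (h ^ 2 + k * h)) := fun j h => by
    rw [← Complex.exp_nat_mul]
    push_cast
    ring_nf
  have hlim := tendsto_eulerMean_of_periodic hD.ne' hp
  rw [hcount] at hlim
  refine hlim.congr fun n => ?_
  simp_rw [hexp, sum_comm (s := range D), ← mul_sum, hζ.sum_pow_mul_eq_ite, mul_sum, eulerMean]
  refine sum_congr rfl fun h _ => ?_
  rw [mul_left_comm, mul_ite _ (1 / (D : ℂ)), one_div_mul_cancel (Nat.cast_ne_zero.mpr hD.ne'),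
    mul_zero]
end
end

section
/- There exist constants $C$ and $n_0$ such that for all positive integers $d,\delta$ and all integers $n,m,m'$ with $m'\ge m\ge n+n_0$, $\big|\mathbf\Delta((d,n),(\delta,m)) - \mathbf\Delta((d,n),(\delta,m'))\big| \le C\Big(\frac{\log(m-n)}{m-n}\Big)^{1/2}$. -/
/-
Write `B m = B n + Y`, where `Y` is the sum of the `m - n` coins `b (n+1), …, b m`, independent
of `B n`. Splitting according to `B n mod δ` shows that `|Δ((d,n),(δ,m))| ≤ 2ε` as soon as
`|P(δ ∣ r + Y) - 1/δ| ≤ ε` for every `r`. By the roots-of-unity filter, with `ζ = exp(2πi/δ)`,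
  `P(δ ∣ r + Y) - 1/δ = δ⁻¹ ∑_{0<j<δ} ζ^{jr} ((1 + ζ^j)/2)^(m-n)`,
and `|(1 + ζ^j)/2| = |cos(πj/δ)|`. Since `cos x ≤ exp(-2x²/π²)` on `[0, π/2]`, the sum is
dominated by a Gaussian integral, so one can take `ε = (π/(2(m-n)))^{1/2}`. Each of the two
correlations is therefore `O((m-n)^{-1/2})`, better than the claimed rate.
-/

open MeasureTheory ProbabilityTheory Finset Real
open scoped ENNReal

lemma abs_cos_pow_le_exp {x : ℝ} (hx : |x| ≤ π / 2) (N : ℕ) :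
    |cos x| ^ N ≤ exp (-(2 * N / π ^ 2) * x ^ 2) := by
  have hcos : 0 ≤ cos x := cos_nonneg_of_mem_Icc (abs_le.1 hx)
  have hquad : cos x ≤ 1 - 2 / π ^ 2 * x ^ 2 :=
    cos_le_one_sub_mul_cos_sq (hx.trans (by linarith [pi_pos]))
  calc |cos x| ^ N ≤ exp (-(2 / π ^ 2 * x ^ 2)) ^ N := by
        rw [abs_of_nonneg hcos]
        gcongr
        linarith [add_one_le_exp (-(2 / π ^ 2 * x ^ 2))]
    _ = exp (-(2 * N / π ^ 2) * x ^ 2) := by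
        rw [← exp_nat_mul]; ring_nf

lemma sum_Ico_exp_neg_mul_sq_le {c : ℝ} (hc : 0 < c) (K : ℕ) :
    ∑ j ∈ Ico 1 K, exp (-c * j ^ 2) ≤ √(π / c) / 2 := by
  have hanti : AntitoneOn (fun x : ℝ ↦ exp (-c * x ^ 2)) (Set.Icc 0 (0 + (K - 1 : ℕ))) := by
    intro x hx y hy hxy
    simp only [exp_le_exp, neg_mul, neg_le_neg_iff]
    have := hx.1
    gcongr
  calc ∑ j ∈ Ico 1 K, exp (-c * j ^ 2)
      = ∑ i ∈ range (K - 1), exp (-c * ((0 : ℝ) + ↑(i + 1)) ^ 2) := by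
        rw [sum_Ico_eq_sum_range]
        refine sum_congr rfl fun i _ ↦ ?_
        push_cast; ring_nf
    _ ≤ ∫ x in (0 : ℝ)..0 + (K - 1 : ℕ), exp (-c * x ^ 2) := hanti.sum_le_integral
    _ ≤ ∫ x in Set.Ioi (0 : ℝ), exp (-c * x ^ 2) := by
        rw [intervalIntegral.integral_of_le (by positivity)]
        exact setIntegral_mono_set (integrable_exp_neg_mul_sq hc).integrableOn
          (.of_forall fun _ ↦ (exp_pos _).le) (.of_forall Set.Ioc_subset_Ioi_self)
    _ = √(π / c) / 2 := integral_gaussian_Ioi c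

lemma sum_Ico_abs_cos_pow_le {δ N : ℕ} (hδ : 0 < δ) (hN : 0 < N) :
    ∑ j ∈ Ico 1 δ, |cos (π * j / δ)| ^ N ≤ δ * √(π / (2 * N)) := by
  set c : ℝ := 2 * N / δ ^ 2
  have hc : 0 < c := by positivity
  set E : ℕ → ℝ := fun j ↦ exp (-c * j ^ 2)
  have hterm : ∀ j : ℕ, 2 * j ≤ δ → |cos (π * j / δ)| ^ N ≤ E j := by
    intro j hj
    have hδ' : (0 : ℝ) < δ := by exact_mod_cast hδ
    have hx : |π * j / δ| ≤ π / 2 := by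
      rw [abs_of_nonneg (by positivity), div_le_div_iff₀ hδ' two_pos]
      have : (2 * j : ℝ) ≤ δ := by exact_mod_cast hj
      nlinarith [pi_pos]
    refine (abs_cos_pow_le_exp hx N).trans_eq ?_
    simp only [E, c]
    congr 1
    field_simp
  have hreflect : ∀ j ∈ Ico 1 δ, |cos (π * j / δ)| = |cos (π * (δ - j : ℕ) / δ)| := by
    intro j hj
    have hjδ : j ≤ δ := (mem_Ico.1 hj).2.le
    have hδ' : (δ : ℝ) ≠ 0 := by positivity
    have hangle : π * ((δ - j : ℕ) : ℝ) / δ = π - π * j / δ := by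
      rw [Nat.cast_sub hjδ]; field_simp
    rw [hangle, cos_pi_sub, abs_neg]
  have hsplit : ∀ j ∈ Ico 1 δ, |cos (π * j / δ)| ^ N ≤ E j + E (δ - j) := by
    intro j hj
    have hjδ : j < δ := (mem_Ico.1 hj).2
    rcases le_total (2 * j) δ with h | h
    · linarith [hterm j h, exp_pos (-c * ((δ - j : ℕ) : ℝ) ^ 2)]
    · rw [hreflect j hj]
      linarith [hterm (δ - j) (by omega), exp_pos (-c * (j : ℝ) ^ 2)]
  have hsym : ∑ j ∈ Ico 1 δ, E (δ - j) = ∑ j ∈ Ico 1 δ, E j :=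
    sum_nbij' (δ - ·) (δ - ·) (by intro a ha; simp at ha ⊢; omega)
      (by intro a ha; simp at ha ⊢; omega) (by intro a ha; simp at ha; omega)
      (by intro a ha; simp at ha; omega) (fun _ _ ↦ rfl)
  calc ∑ j ∈ Ico 1 δ, |cos (π * j / δ)| ^ N
      ≤ ∑ j ∈ Ico 1 δ, (E j + E (δ - j)) := sum_le_sum hsplit
    _ = 2 * ∑ j ∈ Ico 1 δ, E j := by rw [sum_add_distrib, hsym]; ring
    _ ≤ 2 * (√(π / c) / 2) := by gcongr; exact sum_Ico_exp_neg_mul_sq_le hc δ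
    _ = δ * √(π / (2 * N)) := by
        rw [show π / c = δ ^ 2 * (π / (2 * N)) by simp only [c]; field_simp,
          sqrt_mul (by positivity), sqrt_sq (by positivity)]
        ring

theorem IsPrimitiveRoot.sum_pow_pow_eq_ite {R : Type*} [CommRing R] [IsDomain R] {ζ : R}
    {k : ℕ} (hζ : IsPrimitiveRoot ζ k) (t : ℕ) :
    ∑ j ∈ range k, (ζ ^ j) ^ t = if k ∣ t then (k : R) else 0 := by
  simp_rw [← pow_mul, mul_comm _ t, pow_mul]
  split_ifs with h
  · simp [(hζ.pow_eq_one_iff_dvd t).2 h]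
  · have hne : ζ ^ t - 1 ≠ 0 := sub_ne_zero.2 fun h' ↦ h ((hζ.pow_eq_one_iff_dvd t).1 h')
    have hsum := geom_sum_mul (ζ ^ t) k
    rw [← pow_mul, mul_comm t k, pow_mul, hζ.pow_eq_one, one_pow, sub_self] at hsum
    exact (mul_eq_zero.1 hsum).resolve_right hne

theorem Complex.norm_one_add_exp_I_mul_ofReal (x : ℝ) :
    ‖1 + Complex.exp (Complex.I * x)‖ = 2 * |Real.cos (x / 2)| := by
  have hshift :
      1 + Complex.exp (Complex.I * x) = -(Complex.exp (Complex.I * ↑(x + π)) - 1) := by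
    rw [Complex.ofReal_add, mul_add, Complex.exp_add, mul_comm Complex.I π, Complex.exp_pi_mul_I]
    ring
  rw [hshift, norm_neg, Complex.norm_exp_I_mul_ofReal_sub_one, add_div, Real.sin_add_pi_div_two,
    norm_mul, Real.norm_two, Real.norm_eq_abs]

lemma abs_sum_mul_sub_sum_mul_sum_le {κ : Type*} {s : Finset κ} {a w q : κ → ℝ} {c ε : ℝ}
    (ha : ∀ i ∈ s, 0 ≤ a i) (hw : ∀ i ∈ s, 0 ≤ w i) (ha1 : ∑ i ∈ s, a i ≤ 1)
    (hw1 : ∑ i ∈ s, w i = 1) (hq : ∀ i ∈ s, |q i - c| ≤ ε) :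
    |∑ i ∈ s, a i * q i - (∑ i ∈ s, a i) * ∑ i ∈ s, w i * q i| ≤ 2 * ε := by
  obtain ⟨i₀, hi₀⟩ := s.nonempty_of_sum_ne_zero (hw1 ▸ one_ne_zero)
  have hε : 0 ≤ ε := (abs_nonneg _).trans (hq i₀ hi₀)
  have hdev : ∀ v : κ → ℝ, (∀ i ∈ s, 0 ≤ v i) →
      |∑ i ∈ s, v i * (q i - c)| ≤ (∑ i ∈ s, v i) * ε := fun v hv ↦ by
    rw [sum_mul]
    refine (abs_sum_le_sum_abs _ _).trans (sum_le_sum fun i hi ↦ ?_)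
    rw [abs_mul, abs_of_nonneg (hv i hi)]
    exact mul_le_mul_of_nonneg_left (hq i hi) (hv i hi)
  have hA : 0 ≤ ∑ i ∈ s, a i := sum_nonneg ha
  have hcentre : ∑ i ∈ s, a i * q i - (∑ i ∈ s, a i) * ∑ i ∈ s, w i * q i =
      ∑ i ∈ s, a i * (q i - c) - (∑ i ∈ s, a i) * ∑ i ∈ s, w i * (q i - c) := by
    simp only [mul_sub, sum_sub_distrib, ← sum_mul, hw1]
    ring
  rw [hcentre]
  calc _ ≤ |∑ i ∈ s, a i * (q i - c)|
        + (∑ i ∈ s, a i) * |∑ i ∈ s, w i * (q i - c)| := by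
        rw [← abs_of_nonneg hA, ← abs_mul, abs_of_nonneg hA]
        exact abs_sub _ _
    _ ≤ 1 * ε + 1 * (1 * ε) := by
        gcongr
        · exact (hdev a ha).trans (by gcongr)
        · exact (hdev w hw).trans_eq (by rw [hw1])
    _ = 2 * ε := by ring

section Residues

variable {Ω : Type*} [MeasurableSpace Ω] {P : Measure Ω} {X Y : Ω → ℕ} {δ : ℕ}

lemma measureReal_eq_sum_inter_mod [IsFiniteMeasure P] (hX : Measurable X) (hδ : 0 < δ)
    {A : Set Ω} (hA : MeasurableSet A) :
    P.real A = ∑ r ∈ range δ, P.real (A ∩ {ω | X ω % δ = r}) := by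
  rw [← measureReal_biUnion_finset]
  · congr 1
    ext ω
    simp [Nat.mod_lt _ hδ]
  · intro r _ r' _ hrr'
    exact Set.disjoint_left.2 fun ω h h' ↦ hrr' (h.2.symm.trans h'.2)
  · exact fun r _ ↦ hA.inter (hX (.of_discrete (s := {x | x % δ = r})))

lemma measureReal_and_dvd_add_eq_sum [IsFiniteMeasure P] (hXY : IndepFun X Y P)
    (hX : Measurable X) (hY : Measurable Y) (hδ : 0 < δ) (p : ℕ → Prop) :
    P.real {ω | p (X ω) ∧ δ ∣ X ω + Y ω} =
      ∑ r ∈ range δ, P.real {ω | p (X ω) ∧ X ω % δ = r} * P.real {ω | δ ∣ r + Y ω} := by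
  have hA : MeasurableSet {ω | p (X ω) ∧ δ ∣ X ω + Y ω} :=
    (hX.prodMk hY) (.of_discrete (s := {z : ℕ × ℕ | p z.1 ∧ δ ∣ z.1 + z.2}))
  rw [measureReal_eq_sum_inter_mod hX hδ hA]
  refine sum_congr rfl fun r _ ↦ ?_
  have hfibre : {ω | p (X ω) ∧ δ ∣ X ω + Y ω} ∩ {ω | X ω % δ = r} =
      X ⁻¹' {x | p x ∧ x % δ = r} ∩ Y ⁻¹' {y | δ ∣ r + y} := by
    ext ω
    simp only [Set.mem_inter_iff, Set.mem_ofPred_eq, Set.mem_preimage, Nat.dvd_iff_mod_eq_zero]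
    constructor
    · rintro ⟨⟨hp, hdvd⟩, rfl⟩
      exact ⟨⟨hp, rfl⟩, by rwa [Nat.mod_add_mod]⟩
    · rintro ⟨⟨hp, rfl⟩, hdvd⟩
      exact ⟨⟨hp, by rwa [Nat.mod_add_mod] at hdvd⟩, rfl⟩
  rw [hfibre, measureReal_def,
    hXY.measure_inter_preimage_eq_mul _ _ (.of_discrete) (.of_discrete), ENNReal.toReal_mul]
  rfl

theorem abs_measureReal_and_dvd_add_sub_mul_le [IsProbabilityMeasure P] (hXY : IndepFun X Y P)
    (hX : Measurable X) (hY : Measurable Y) (hδ : 0 < δ) (p : ℕ → Prop) {ε : ℝ}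
    (hequi : ∀ r, |P.real {ω | δ ∣ r + Y ω} - (δ : ℝ)⁻¹| ≤ ε) :
    |P.real {ω | p (X ω) ∧ δ ∣ X ω + Y ω} -
      P.real {ω | p (X ω)} * P.real {ω | δ ∣ X ω + Y ω}| ≤ 2 * ε := by
  have hp : P.real {ω | p (X ω)} = ∑ r ∈ range δ, P.real {ω | p (X ω) ∧ X ω % δ = r} :=
    measureReal_eq_sum_inter_mod hX hδ (hX (.of_discrete (s := {x | p x})))
  have hone := measureReal_eq_sum_inter_mod (P := P) hX hδ MeasurableSet.univ
  have hmarg := measureReal_and_dvd_add_eq_sum hXY hX hY hδ fun _ ↦ True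
  simp only [true_and, Set.univ_inter, probReal_univ] at hmarg hone
  rw [measureReal_and_dvd_add_eq_sum hXY hX hY hδ p, hmarg, hp]
  exact abs_sum_mul_sub_sum_mul_sum_le (fun _ _ ↦ measureReal_nonneg)
    (fun _ _ ↦ measureReal_nonneg) (hp ▸ measureReal_le_one) hone.symm fun r _ ↦ hequi r

end Residues

lemma ProbabilityTheory.iIndepFun.indepFun_finsetSum_finsetSum {Ω ι β : Type*}
    [MeasurableSpace Ω] {μ : Measure Ω} [AddCommMonoid β] [MeasurableSpace β] [MeasurableAdd₂ β]
    {f : ι → Ω → β} (hf : iIndepFun f μ) (hmeas : ∀ i, Measurable (f i)) {s t : Finset ι}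
    (hst : Disjoint s t) :
    IndepFun (fun ω ↦ ∑ i ∈ s, f i ω) (fun ω ↦ ∑ i ∈ t, f i ω) μ := by
  have hsum : ∀ u : Finset ι, Measurable fun v : u → β ↦ ∑ i, v i := fun u ↦
    Finset.measurable_sum _ fun i _ ↦ measurable_pi_apply i
  convert (hf.indepFun_finset s t hst hmeas).comp (hsum s) (hsum t) using 1 <;>
    exact funext fun ω ↦ (sum_coe_sort _ fun i ↦ f i ω).symm

section FairCoins

variable {Ω : Type*} [MeasurableSpace Ω] {P : Measure Ω} [IsProbabilityMeasure P]

lemma map_eq_of_fair_coin {b : Ω → ℕ} (hb : Measurable b) (h0 : P {ω | b ω = 0} = 1 / 2)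
    (h1 : P {ω | b ω = 1} = 1 / 2) :
    P.map b = (2⁻¹ : ℝ≥0∞) • (Measure.dirac 0 + Measure.dirac 1) := by
  change P (b ⁻¹' {0}) = 1 / 2 at h0
  change P (b ⁻¹' {1}) = 1 / 2 at h1
  refine Measure.ext_of_singleton fun a ↦ ?_
  rw [Measure.map_apply hb (measurableSet_singleton a)]
  rcases a with _ | _ | a
  · simp [h0]
  · simp [h1]
  · have hcover : P (b ⁻¹' {0} ∪ b ⁻¹' {1}) = 1 := by
      rw [measure_union (by simp +contextual [Set.disjoint_left])
        (hb (measurableSet_singleton 1)), h0, h1, ENNReal.add_halves]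
    have hnull : P (b ⁻¹' {0} ∪ b ⁻¹' {1})ᶜ = 0 :=
      (prob_compl_eq_zero_iff ((hb (measurableSet_singleton 0)).union
        (hb (measurableSet_singleton 1)))).2 hcover
    simp only [Measure.smul_apply, Measure.add_apply, smul_eq_mul]
    rw [measure_mono_null (fun ω hω ↦ by simp_all) hnull]
    simp

lemma integral_comp_of_fair_coin {E : Type*} [NormedAddCommGroup E] [NormedSpace ℝ E]
    [CompleteSpace E] {b : Ω → ℕ} (hb : Measurable b) (h0 : P {ω | b ω = 0} = 1 / 2)
    (h1 : P {ω | b ω = 1} = 1 / 2) (g : ℕ → E) :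
    ∫ ω, g (b ω) ∂P = (2⁻¹ : ℝ) • (g 0 + g 1) := by
  rw [← integral_map hb.aemeasurable StronglyMeasurable.of_discrete.aestronglyMeasurable,
    map_eq_of_fair_coin hb h0 h1, integral_smul_measure,
    integral_add_measure (integrable_dirac enorm_lt_top) (integrable_dirac enorm_lt_top),
    integral_dirac, integral_dirac, smul_add, ENNReal.toReal_inv, ENNReal.toReal_ofNat, smul_add]

variable {ι : Type*} {b : ι → Ω → ℕ} (hmeas : ∀ i, Measurable (b i)) (hindep : iIndepFun b P)
  (h0 : ∀ i, P {ω | b i ω = 0} = 1 / 2) (h1 : ∀ i, P {ω | b i ω = 1} = 1 / 2)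
include hmeas hindep h0 h1

lemma integral_pow_sum_of_fair_coins (s : Finset ι) (z : ℂ) :
    ∫ ω, z ^ (∑ i ∈ s, b i ω) ∂P = ((1 + z) / 2) ^ #s := by
  have hprod : ∀ ω, z ^ (∑ i ∈ s, b i ω) = ∏ i : s, z ^ s.restrict b i ω := fun ω ↦ by
    rw [← prod_pow_eq_pow_sum, ← prod_coe_sort]; rfl
  simp_rw [hprod]
  rw [(iIndepFun_iff_finset.1 hindep s).integral_fun_prod_comp (fun i ↦ (hmeas i).aemeasurable)
    fun _ ↦ StronglyMeasurable.of_discrete.aestronglyMeasurable]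
  simp_rw [Finset.restrict, integral_comp_of_fair_coin (hmeas _) (h0 _) (h1 _)]
  rw [prod_const, card_univ, Fintype.card_coe, Complex.real_smul]
  push_cast
  ring

lemma measureReal_dvd_add_sum_fair_coins {δ : ℕ} {ζ : ℂ} (hζ : IsPrimitiveRoot ζ δ)
    (hδ : δ ≠ 0) (r : ℕ) (s : Finset ι) :
    (P.real {ω | δ ∣ r + ∑ i ∈ s, b i ω} : ℂ) =
      (δ : ℂ)⁻¹ * ∑ j ∈ range δ, (ζ ^ j) ^ r * ((1 + ζ ^ j) / 2) ^ #s := by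
  set Y : Ω → ℕ := fun ω ↦ ∑ i ∈ s, b i ω
  have hY : Measurable Y := measurable_sum s fun i _ ↦ hmeas i
  have hfilter :
      ∀ t, (if δ ∣ t then 1 else 0 : ℂ) = (δ : ℂ)⁻¹ * ∑ j ∈ range δ, (ζ ^ j) ^ t := by
    intro t
    rw [hζ.sum_pow_pow_eq_ite]
    split_ifs <;> simp [hδ]
  have hint : ∀ j, Integrable (fun ω ↦ (ζ ^ j) ^ Y ω) P := fun j ↦
    .of_bound (StronglyMeasurable.of_discrete.comp_measurable hY).aestronglyMeasurable 1
      (.of_forall fun ω ↦ by simp [hζ.norm'_eq_one hδ])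
  calc (P.real {ω | δ ∣ r + Y ω} : ℂ)
      = ∫ ω, (δ : ℂ)⁻¹ * ∑ j ∈ range δ, (ζ ^ j) ^ r * (ζ ^ j) ^ Y ω ∂P := by
        have hA : MeasurableSet {ω | δ ∣ r + Y ω} :=
          hY (.of_discrete (s := {t | δ ∣ r + t}))
        rw [← integral_indicator_one hA, ← integral_complex_ofReal]
        refine integral_congr_ae (.of_forall fun ω ↦ ?_)
        simp_rw [← pow_add, ← hfilter, Set.indicator_apply]
        split_ifs <;> simp_all
    _ = (δ : ℂ)⁻¹ * ∑ j ∈ range δ, (ζ ^ j) ^ r * ((1 + ζ ^ j) / 2) ^ #s := by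
        rw [integral_const_mul, integral_finsetSum _ fun j _ ↦ (hint j).const_mul _]
        simp_rw [integral_const_mul, Y, integral_pow_sum_of_fair_coins hmeas hindep h0 h1]

lemma abs_measureReal_dvd_add_sum_fair_coins_sub_le {δ : ℕ} (hδ : 0 < δ) {s : Finset ι}
    (hs : s.Nonempty) (r : ℕ) :
    |P.real {ω | δ ∣ r + ∑ i ∈ s, b i ω} - (δ : ℝ)⁻¹| ≤ √(π / (2 * #s)) := by
  set ζ : ℂ := Complex.exp (2 * π * Complex.I / δ)
  have hζ : IsPrimitiveRoot ζ δ := Complex.isPrimitiveRoot_exp δ hδ.ne'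
  have hδ' : (0 : ℝ) < δ := by exact_mod_cast hδ
  have hnorm :
      ∀ j : ℕ, ‖(ζ ^ j) ^ r * ((1 + ζ ^ j) / 2) ^ #s‖ = |cos (π * j / δ)| ^ #s := by
    intro j
    have hζj : ζ ^ j = Complex.exp (Complex.I * ↑(2 * π * j / δ)) := by
      rw [← Complex.exp_nat_mul]; push_cast; ring_nf
    simp only [norm_mul, norm_pow, hζ.norm'_eq_one hδ.ne', one_pow, one_mul, norm_div]
    rw [hζj, Complex.norm_one_add_exp_I_mul_ofReal, Complex.norm_ofNat]
    ring_nf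
  calc |P.real {ω | δ ∣ r + ∑ i ∈ s, b i ω} - (δ : ℝ)⁻¹|
      = ‖(δ : ℂ)⁻¹ * ∑ j ∈ Ico 1 δ, (ζ ^ j) ^ r * ((1 + ζ ^ j) / 2) ^ #s‖ := by
        rw [← Real.norm_eq_abs, ← Complex.norm_real, Complex.ofReal_sub,
          measureReal_dvd_add_sum_fair_coins hmeas hindep h0 h1 hζ hδ.ne', range_eq_Ico,
          sum_eq_sum_Ico_succ_bot hδ]
        norm_num [mul_add]
    _ ≤ (δ : ℝ)⁻¹ * ∑ j ∈ Ico 1 δ, |cos (π * j / δ)| ^ #s := by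
        rw [norm_mul, norm_inv, Complex.norm_natCast, ← sum_congr rfl fun j _ ↦ hnorm j]
        gcongr
        exact norm_sum_le _ _
    _ ≤ (δ : ℝ)⁻¹ * (δ * √(π / (2 * #s))) := by
        gcongr
        exact sum_Ico_abs_cos_pow_le hδ hs.card_pos
    _ = √(π / (2 * #s)) := by field_simp

lemma abs_measureReal_and_dvd_sum_add_sum_sub_mul_le {δ : ℕ} (hδ : 0 < δ) {s t : Finset ι}
    (hst : Disjoint s t) (ht : t.Nonempty) (p : ℕ → Prop) :
    |P.real {ω | p (∑ i ∈ s, b i ω) ∧ δ ∣ ∑ i ∈ s, b i ω + ∑ i ∈ t, b i ω} -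
      P.real {ω | p (∑ i ∈ s, b i ω)} * P.real {ω | δ ∣ ∑ i ∈ s, b i ω + ∑ i ∈ t, b i ω}|
      ≤ 2 * √(π / (2 * #t)) :=
  abs_measureReal_and_dvd_add_sub_mul_le (hindep.indepFun_finsetSum_finsetSum hmeas hst)
    (measurable_sum s fun i _ ↦ hmeas i) (measurable_sum t fun i _ ↦ hmeas i) hδ p
    (abs_measureReal_dvd_add_sum_fair_coins_sub_le hmeas hindep h0 h1 hδ ht)

end FairCoins

lemma sqrt_pi_div_two_mul_le_sqrt_pi_mul_rpow {N : ℕ} (hN : 2 ≤ N) :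
    √(π / (2 * N)) ≤ √π * (Real.log N / N) ^ ((1 : ℝ) / 2) := by
  have hN' : (2 : ℝ) ≤ N := by exact_mod_cast hN
  have hlog : (1 : ℝ) / 2 ≤ Real.log N :=
    (by linarith [Real.log_two_gt_d9] : (1 : ℝ) / 2 ≤ Real.log 2).trans
      (Real.log_le_log two_pos hN')
  rw [← sqrt_eq_rpow, ← sqrt_mul pi_pos.le]
  gcongr
  rw [mul_div_assoc', div_le_div_iff₀ (by positivity) (by positivity)]
  nlinarith [mul_le_mul_of_nonneg_left hlog (by positivity : 0 ≤ 2 * π * N)]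

/-- Proposition 2.19, stability of the correlation in the second time
parameter. -/
theorem correlation_difference_bound
    {Ω : Type*} [MeasurableSpace Ω] (P : Measure Ω) [IsProbabilityMeasure P]
    (b : ℕ → Ω → ℕ) (hmeas : ∀ i, Measurable (b i))
    (hindep : iIndepFun b P)
    (h0 : ∀ i, P {ω | b i ω = 0} = 1/2) (h1 : ∀ i, P {ω | b i ω = 1} = 1/2)
    (B : ℕ → Ω → ℕ) (hB : ∀ n ω, B n ω = ∑ i ∈ Finset.range n, b (i + 1) ω)
    -- the correlation function `Δ((d,n),(δ,m))`
    (Δ : ℕ → ℕ → ℕ → ℕ → ℝ)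
    (hΔ : ∀ d δ n m, Δ d n δ m =
      (P {ω | d ∣ B n ω ∧ δ ∣ B m ω}).toReal
        - (P {ω | d ∣ B n ω}).toReal * (P {ω | δ ∣ B m ω}).toReal) :
    ∃ (C : ℝ) (n₀ : ℕ), ∀ d δ n m m' : ℕ, 0 < d → 0 < δ → 1 ≤ n →
      n + n₀ ≤ m → m ≤ m' →
      |Δ d n δ m - Δ d n δ m'|
        ≤ C * (Real.log ((m - n : ℕ) : ℝ) / ((m - n : ℕ) : ℝ)) ^ ((1:ℝ)/2) := by
  refine ⟨4 * √π, 2, fun d δ n m m' _ hδ _ hm hmm' ↦ ?_⟩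
  have hcorr : ∀ M, n < M → |Δ d n δ M| ≤ 2 * √(π / (2 * (M - n : ℕ))) := fun M hM ↦ by
    have hsplit : ∀ ω, B M ω = B n ω + ∑ i ∈ Ico n M, b (i + 1) ω := fun ω ↦ by
      rw [hB, hB, sum_range_add_sum_Ico _ hM.le]
    have hdisj : Disjoint (range n) (Ico n M) := by
      rw [range_eq_Ico]; exact Ico_disjoint_Ico_consecutive 0 n M
    have hcoins := abs_measureReal_and_dvd_sum_add_sum_sub_mul_le (fun i ↦ hmeas (i + 1))
      (hindep.precomp (add_left_injective 1)) (fun i ↦ h0 (i + 1)) (fun i ↦ h1 (i + 1)) hδ hdisj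
      (nonempty_Ico.2 hM) (d ∣ ·)
    simp only [← hB, ← hsplit, Nat.card_Ico] at hcoins
    rwa [hΔ]
  have hN : 2 ≤ m - n := by omega
  calc |Δ d n δ m - Δ d n δ m'|
      ≤ |Δ d n δ m| + |Δ d n δ m'| := abs_sub _ _
    _ ≤ 2 * √(π / (2 * (m - n : ℕ))) + 2 * √(π / (2 * (m - n : ℕ))) := by
        gcongr
        · exact hcorr m (by omega)
        · refine (hcorr m' (by omega)).trans ?_
          gcongr
    _ ≤ 4 * √π * (Real.log ((m - n : ℕ) : ℝ) / ((m - n : ℕ) : ℝ)) ^ ((1:ℝ)/2) := by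
        have := sqrt_pi_div_two_mul_le_sqrt_pi_mul_rpow hN
        linarith
end
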